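/- (Corollary 1, minimizer drift bound.) Under τ‖A_t‖₂² ≤ 1, ‖v_t‖₂ ≤ v_M, ‖z_t‖₂ ≤ z_M, the distance between consecutive Elastic-net minimizers satisfies ‖z_t − z_{t−1}‖₂ ≤ (z_M + v_M)·‖A_tᵀA_t − A_{t−1}ᵀA_{t−1}‖₂/μ + ‖v_t − v_{t−1}‖₂/(μτ), in the noiseless case y_t = A_t v_t. -/

import Mathlib

/-!
A minimizer `z` of the elastic net `f` is a fixed point of the IST map. Indeed, when
`τ‖A‖² ≤ 1`, `x ↦ τ f(x) + ‖x - z‖² / 2 - τ‖A(x - z)‖² / 2` majorizes `τ f` and touches it at `z`;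
up to a constant it is separable, and its coordinatewise minimizer is given by soft thresholding.
Subtracting the fixed-point equations of `z` and `z'`: soft thresholding and `x ↦ x - τAᵀAx` are
nonexpansive, and the rest is bounded by `τ‖AᵀA - A'ᵀA'‖(‖v‖ + ‖z'‖) + ‖v - v'‖`. The factor
`(1 + μτ)⁻¹` in front makes `‖z - z'‖ ≤ (1 + μτ)⁻¹ (‖z - z'‖ + …)` solvable for `‖z - z'‖`.
-/

/-- Scalar soft thresholding operator. -/
noncomputable def softThresh (β z : ℝ) : ℝ :=
  if β < z then z - β else if z < -β then z + β else 0

/-- Componentwise soft thresholding on ℝⁿ. -/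
noncomputable def softThreshVec {n : ℕ} (β : ℝ) (x : EuclideanSpace ℝ (Fin n)) :
    EuclideanSpace ℝ (Fin n) :=
  WithLp.toLp 2 (fun i => softThresh β (x i))

/-- The ℓ¹ norm on ℝⁿ. -/
noncomputable def l1norm {n : ℕ} (x : EuclideanSpace ℝ (Fin n)) : ℝ := ∑ i, |x i|

/-- The Elastic-net functional f(x) = (1/2)‖y − Ax‖² + λ‖x‖₁ + (μ/2)‖x‖². -/
noncomputable def enet {n m : ℕ} (A : EuclideanSpace ℝ (Fin n) →L[ℝ] EuclideanSpace ℝ (Fin m))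
    (y : EuclideanSpace ℝ (Fin m)) (lam μ : ℝ) (x : EuclideanSpace ℝ (Fin n)) : ℝ :=
  (1/2) * ‖y - A x‖^2 + lam * l1norm x + (μ/2) * ‖x‖^2

/-- The IST map Γ(x) = S_{λτ/(μτ+1)}[(x + τAᵀ(y − Ax))/(1 + μτ)]. -/
noncomputable def istMap {n m : ℕ} (A : EuclideanSpace ℝ (Fin n) →L[ℝ] EuclideanSpace ℝ (Fin m))
    (y : EuclideanSpace ℝ (Fin m)) (lam μ τ : ℝ) (x : EuclideanSpace ℝ (Fin n)) :
    EuclideanSpace ℝ (Fin n) :=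
  softThreshVec (lam * τ / (μ * τ + 1))
    ((1 + μ * τ)⁻¹ • (x + τ • (ContinuousLinearMap.adjoint A) (y - A x)))

open scoped InnerProduct RealInnerProductSpace

theorem abs_softThresh_sub_le {β : ℝ} (hβ : 0 ≤ β) (s t : ℝ) :
    |softThresh β s - softThresh β t| ≤ |s - t| := by
  unfold softThresh
  split_ifs <;> rw [abs_le] <;> constructor <;> linarith [le_abs_self (s - t), neg_abs_le (s - t)]

theorem norm_softThreshVec_sub_le {n : ℕ} {β : ℝ} (hβ : 0 ≤ β) (x y : EuclideanSpace ℝ (Fin n)) :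
    ‖softThreshVec β x - softThreshVec β y‖ ≤ ‖x - y‖ := by
  rw [EuclideanSpace.norm_eq, EuclideanSpace.norm_eq]
  gcongr with i
  simpa [softThreshVec] using abs_softThresh_sub_le hβ (x i) (y i)

noncomputable def absProxObjective (lam a b s : ℝ) : ℝ := lam * |s| + a / 2 * s ^ 2 - b * s

theorem absProxObjective_softThresh_add_le {lam a : ℝ} (hlam : 0 ≤ lam) (ha : 0 < a) (b s : ℝ) :
    absProxObjective lam a b (softThresh (lam / a) (a⁻¹ * b))
        + a / 2 * (s - softThresh (lam / a) (a⁻¹ * b)) ^ 2 ≤ absProxObjective lam a b s := by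
  rw [inv_mul_eq_div]
  unfold absProxObjective softThresh
  split_ifs with hpos hneg
  · have : lam < b := (div_lt_div_iff_of_pos_right ha).1 hpos
    have hat : a * (b / a - lam / a) = b - lam := by field_simp
    rw [abs_of_nonneg (by linarith : 0 ≤ b / a - lam / a)]
    nlinarith [mul_le_mul_of_nonneg_left (le_abs_self s) hlam]
  · have : b < -lam := by rwa [← neg_div, div_lt_div_iff_of_pos_right ha] at hneg
    have hat : a * (b / a + lam / a) = b + lam := by field_simp
    rw [abs_of_nonpos (by linarith : b / a + lam / a ≤ 0)]
    nlinarith [mul_le_mul_of_nonneg_left (neg_abs_le s) hlam]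
  · have : b ≤ lam := (div_le_div_iff_of_pos_right ha).1 (not_lt.1 hpos)
    have : -lam ≤ b := by rwa [not_lt, ← neg_div, div_le_div_iff_of_pos_right ha] at hneg
    rcases abs_cases s with ⟨h, _⟩ | ⟨h, _⟩ <;> rw [h] <;> nlinarith

theorem eq_softThresh_of_forall_absProxObjective_le {lam a b t : ℝ} (hlam : 0 ≤ lam) (ha : 0 < a)
    (ht : ∀ s, absProxObjective lam a b t ≤ absProxObjective lam a b s) :
    t = softThresh (lam / a) (a⁻¹ * b) := by
  have hstrong := absProxObjective_softThresh_add_le hlam ha b t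
  have hsq : (t - softThresh (lam / a) (a⁻¹ * b)) ^ 2 ≤ 0 := by
    nlinarith [ht (softThresh (lam / a) (a⁻¹ * b))]
  exact sub_eq_zero.1 (pow_eq_zero_iff two_ne_zero |>.1 (le_antisymm hsq (sq_nonneg _)))

theorem le_of_forall_sum_le {ι α : Type*} [Fintype ι] [DecidableEq ι] {φ : ι → α → ℝ}
    {x : ι → α} (h : ∀ y : ι → α, ∑ i, φ i (x i) ≤ ∑ i, φ i (y i)) (i : ι) (s : α) :
    φ i (x i) ≤ φ i s := by
  have hdiff : ∑ j, (φ j (Function.update x i s j) - φ j (x j)) = φ i s - φ i (x i) := by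
    rw [Finset.sum_eq_single i (fun j _ hj => by simp [hj]) (by simp)]
    simp
  have hupdate := h (Function.update x i s)
  rw [Finset.sum_sub_distrib] at hdiff
  linarith

/-- Equals `lam * ‖x‖₁ + (a / 2) * ‖x - a⁻¹ • w‖²` up to a constant, so its minimizer is the
proximal point of `(lam / a) * ‖·‖₁` at `a⁻¹ • w`. -/
noncomputable def l1ProxObjective {n : ℕ} (lam a : ℝ) (w x : EuclideanSpace ℝ (Fin n)) : ℝ :=
  lam * l1norm x + a / 2 * ‖x‖ ^ 2 - ⟪w, x⟫

theorem l1ProxObjective_eq_sum {n : ℕ} (lam a : ℝ) (w x : EuclideanSpace ℝ (Fin n)) :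
    l1ProxObjective lam a w x = ∑ i, absProxObjective lam a (w i) (x i) := by
  simp only [l1ProxObjective, absProxObjective, l1norm, EuclideanSpace.norm_sq_eq,
    PiLp.inner_apply, RCLike.inner_apply, conj_trivial, Real.norm_eq_abs, sq_abs,
    Finset.mul_sum, ← Finset.sum_add_distrib, ← Finset.sum_sub_distrib]
  exact Finset.sum_congr rfl fun i _ => by ring

theorem eq_softThreshVec_of_forall_l1ProxObjective_le {n : ℕ} {lam a : ℝ} (hlam : 0 ≤ lam)
    (ha : 0 < a) {w z : EuclideanSpace ℝ (Fin n)}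
    (hz : ∀ x, l1ProxObjective lam a w z ≤ l1ProxObjective lam a w x) :
    z = softThreshVec (lam / a) (a⁻¹ • w) := by
  ext i
  refine eq_softThresh_of_forall_absProxObjective_le hlam ha fun s => ?_
  refine le_of_forall_sum_le (φ := fun i => absProxObjective lam a (w i)) (fun y => ?_) i s
  simpa [l1ProxObjective_eq_sum] using hz (WithLp.toLp 2 y)

theorem mul_norm_apply_sq_le {E F : Type*} [SeminormedAddCommGroup E] [NormedSpace ℝ E]
    [SeminormedAddCommGroup F] [NormedSpace ℝ F] {A : E →L[ℝ] F} {τ : ℝ} (hτ : 0 ≤ τ)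
    (hA : τ * ‖A‖ ^ 2 ≤ 1) (u : E) : τ * ‖A u‖ ^ 2 ≤ ‖u‖ ^ 2 :=
  calc τ * ‖A u‖ ^ 2 ≤ τ * (‖A‖ * ‖u‖) ^ 2 := by gcongr; exact A.le_opNorm u
    _ = τ * ‖A‖ ^ 2 * ‖u‖ ^ 2 := by ring
    _ ≤ ‖u‖ ^ 2 := mul_le_of_le_one_left (sq_nonneg _) hA

section HilbertSpace

variable {E F : Type*} [NormedAddCommGroup E] [InnerProductSpace ℝ E] [CompleteSpace E]
  [NormedAddCommGroup F] [InnerProductSpace ℝ F] [CompleteSpace F]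

theorem norm_sub_smul_adjoint_apply_le {A : E →L[ℝ] F} {τ : ℝ} (hτ : 0 ≤ τ)
    (hA : τ * ‖A‖ ^ 2 ≤ 1) (u : E) : ‖u - τ • (A†) (A u)‖ ≤ ‖u‖ := by
  have hinner : ⟪u, τ • (A†) (A u)⟫ = τ * ‖A u‖ ^ 2 := by
    rw [real_inner_smul_right, ContinuousLinearMap.adjoint_inner_right, real_inner_self_eq_norm_sq]
  have hadj : ‖(A†) (A u)‖ ≤ ‖A‖ * ‖A u‖ := by
    simpa [LinearIsometryEquiv.norm_map] using (A†).le_opNorm (A u)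
  have hsq : ‖τ • (A†) (A u)‖ ^ 2 ≤ τ * ‖A u‖ ^ 2 :=
    calc ‖τ • (A†) (A u)‖ ^ 2 = τ ^ 2 * ‖(A†) (A u)‖ ^ 2 := by
          rw [norm_smul, Real.norm_of_nonneg hτ, mul_pow]
      _ ≤ τ ^ 2 * (‖A‖ * ‖A u‖) ^ 2 := by gcongr
      _ = τ * (τ * ‖A‖ ^ 2) * ‖A u‖ ^ 2 := by ring
      _ ≤ τ * ‖A u‖ ^ 2 :=
          mul_le_mul_of_nonneg_right (mul_le_of_le_one_right hτ hA) (sq_nonneg _)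
  refine pow_le_pow_iff_left₀ (norm_nonneg _) (norm_nonneg u) two_ne_zero |>.1 ?_
  rw [norm_sub_sq_real, hinner]
  nlinarith [mul_nonneg hτ (sq_nonneg ‖A u‖)]

theorem norm_gradientStep_sub_le {A A' : E →L[ℝ] F} {τ : ℝ} (hτ : 0 ≤ τ)
    (hA : τ * ‖A‖ ^ 2 ≤ 1) (hA' : τ * ‖A'‖ ^ 2 ≤ 1) (v v' x x' : E) :
    ‖(x + τ • (A†) (A v - A x)) - (x' + τ • (A'†) (A' v' - A' x'))‖ ≤
      ‖x - x'‖ + τ * ‖A† ∘L A - A'† ∘L A'‖ * (‖v‖ + ‖x'‖) + ‖v - v'‖ := by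
  set G := A† ∘L A
  set G' := A'† ∘L A'
  have hG' : τ * ‖G'‖ ≤ 1 := by rwa [ContinuousLinearMap.norm_adjoint_comp_self, ← sq]
  have hsplit : (x + τ • (A†) (A v - A x)) - (x' + τ • (A'†) (A' v' - A' x')) =
      ((x - x') - τ • (A†) (A (x - x'))) + τ • (G - G') v + τ • G' (v - v')
        - τ • (G - G') x' := by
    simp only [G, G', map_sub, sub_apply, ContinuousLinearMap.comp_apply]
    module
  rw [hsplit]
  calc _ ≤ ‖(x - x') - τ • (A†) (A (x - x'))‖ + ‖τ • (G - G') v‖ + ‖τ • G' (v - v')‖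
          + ‖τ • (G - G') x'‖ := norm_sub_le_of_le (norm_add₃_le) le_rfl
    _ ≤ ‖x - x'‖ + τ * (‖G - G'‖ * ‖v‖) + τ * ‖G'‖ * ‖v - v'‖ + τ * (‖G - G'‖ * ‖x'‖) := by
        simp only [norm_smul, Real.norm_of_nonneg hτ, mul_assoc]
        gcongr
        · exact norm_sub_smul_adjoint_apply_le hτ hA _
        all_goals exact ContinuousLinearMap.le_opNorm _ _
    _ ≤ ‖x - x'‖ + τ * (‖G - G'‖ * ‖v‖) + 1 * ‖v - v'‖ + τ * (‖G - G'‖ * ‖x'‖) := by gcongr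
    _ = ‖x - x'‖ + τ * ‖G - G'‖ * (‖v‖ + ‖x'‖) + ‖v - v'‖ := by ring

end HilbertSpace

section ElasticNet

variable {n m : ℕ}

theorem l1ProxObjective_sub_eq
    (A : EuclideanSpace ℝ (Fin n) →L[ℝ] EuclideanSpace ℝ (Fin m)) (y : EuclideanSpace ℝ (Fin m))
    (lam μ τ : ℝ) (z x : EuclideanSpace ℝ (Fin n)) :
    l1ProxObjective (lam * τ) (1 + μ * τ) (z + τ • (A†) (y - A z)) x
        - l1ProxObjective (lam * τ) (1 + μ * τ) (z + τ • (A†) (y - A z)) z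
      = τ * (enet A y lam μ x - enet A y lam μ z) + ‖x - z‖ ^ 2 / 2
        - τ * ‖A (x - z)‖ ^ 2 / 2 := by
  obtain ⟨d, rfl⟩ : ∃ d, x = z + d := ⟨x - z, by abel⟩
  have hres : y - A (z + d) = (y - A z) - A d := by rw [map_add]; abel
  simp only [l1ProxObjective, enet, hres, add_sub_cancel_left, norm_sub_sq_real, norm_add_sq_real,
    inner_add_left, inner_add_right, real_inner_smul_left, ContinuousLinearMap.adjoint_inner_left,
    real_inner_self_eq_norm_sq]
  ring

theorem l1ProxObjective_le_of_forall_enet_le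
    {A : EuclideanSpace ℝ (Fin n) →L[ℝ] EuclideanSpace ℝ (Fin m)} {y : EuclideanSpace ℝ (Fin m)}
    {lam μ τ : ℝ} (hτ : 0 ≤ τ) (hA : τ * ‖A‖ ^ 2 ≤ 1) {z : EuclideanSpace ℝ (Fin n)}
    (hz : ∀ x, enet A y lam μ z ≤ enet A y lam μ x) (x : EuclideanSpace ℝ (Fin n)) :
    l1ProxObjective (lam * τ) (1 + μ * τ) (z + τ • (A†) (y - A z)) z
      ≤ l1ProxObjective (lam * τ) (1 + μ * τ) (z + τ • (A†) (y - A z)) x := by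
  have hmajor := mul_norm_apply_sq_le hτ hA (x - z)
  nlinarith [l1ProxObjective_sub_eq A y lam μ τ z x, mul_le_mul_of_nonneg_left (hz x) hτ]

theorem istMap_eq_self_of_forall_enet_le
    {A : EuclideanSpace ℝ (Fin n) →L[ℝ] EuclideanSpace ℝ (Fin m)} {y : EuclideanSpace ℝ (Fin m)}
    {lam μ τ : ℝ} (hlam : 0 ≤ lam) (hμ : 0 ≤ μ) (hτ : 0 ≤ τ) (hA : τ * ‖A‖ ^ 2 ≤ 1)
    {z : EuclideanSpace ℝ (Fin n)} (hz : ∀ x, enet A y lam μ z ≤ enet A y lam μ x) :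
    istMap A y lam μ τ z = z := by
  rw [istMap, add_comm (μ * τ)]
  exact (eq_softThreshVec_of_forall_l1ProxObjective_le (mul_nonneg hlam hτ) (by positivity)
    (l1ProxObjective_le_of_forall_enet_le hτ hA hz)).symm

end ElasticNet

theorem minimizer_drift_bound_general {n m : ℕ}
    (A A' : EuclideanSpace ℝ (Fin n) →L[ℝ] EuclideanSpace ℝ (Fin m))
    (v v' : EuclideanSpace ℝ (Fin n)) (lam μ τ v_M z_M : ℝ)
    (hlam : 0 < lam) (hμ : 0 < μ) (hτ : 0 < τ)
    (hA : τ * ‖A‖^2 ≤ 1) (hA' : τ * ‖A'‖^2 ≤ 1)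
    (hv : ‖v‖ ≤ v_M)
    (z z' : EuclideanSpace ℝ (Fin n))
    (hz : ∀ x, enet A (A v) lam μ z ≤ enet A (A v) lam μ x)
    (hz' : ∀ x, enet A' (A' v') lam μ z' ≤ enet A' (A' v') lam μ x)
    (hzM' : ‖z'‖ ≤ z_M) :
    ‖z - z'‖ ≤
      (z_M + v_M) *
        ‖(ContinuousLinearMap.adjoint A).comp A - (ContinuousLinearMap.adjoint A').comp A'‖ / μ +
      ‖v - v'‖ / (μ * τ) := by
  set D := ‖A† ∘L A - A'† ∘L A'‖
  have hfix := istMap_eq_self_of_forall_enet_le hlam.le hμ.le hτ.le hA hz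
  have hfix' := istMap_eq_self_of_forall_enet_le hlam.le hμ.le hτ.le hA' hz'
  have hstep : ‖z - z'‖ ≤ (1 + μ * τ)⁻¹ * (‖z - z'‖ + τ * D * (v_M + z_M) + ‖v - v'‖) :=
    calc ‖z - z'‖ = ‖istMap A (A v) lam μ τ z - istMap A' (A' v') lam μ τ z'‖ := by
          rw [hfix, hfix']
      _ ≤ ‖(1 + μ * τ)⁻¹ • (z + τ • (A†) (A v - A z))
            - (1 + μ * τ)⁻¹ • (z' + τ • (A'†) (A' v' - A' z'))‖ :=
          norm_softThreshVec_sub_le (by positivity) _ _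
      _ ≤ (1 + μ * τ)⁻¹ * (‖z - z'‖ + τ * D * (‖v‖ + ‖z'‖) + ‖v - v'‖) := by
          rw [← smul_sub, norm_smul, Real.norm_of_nonneg (by positivity)]
          gcongr
          exact norm_gradientStep_sub_le hτ.le hA hA' v v' z z'
      _ ≤ (1 + μ * τ)⁻¹ * (‖z - z'‖ + τ * D * (v_M + z_M) + ‖v - v'‖) := by gcongr
  have hcontract : μ * τ * ‖z - z'‖ ≤ τ * D * (v_M + z_M) + ‖v - v'‖ := by
    rw [inv_mul_eq_div, le_div_iff₀ (by positivity)] at hstep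
    linarith
  calc ‖z - z'‖ = μ * τ * ‖z - z'‖ / (μ * τ) := by field_simp
    _ ≤ (τ * D * (v_M + z_M) + ‖v - v'‖) / (μ * τ) := by gcongr
    _ = _ := by field_simp; ring

theorem minimizer_drift_bound {n m : ℕ}
    (A A' : EuclideanSpace ℝ (Fin n) →L[ℝ] EuclideanSpace ℝ (Fin m))
    (v v' : EuclideanSpace ℝ (Fin n)) (lam μ τ v_M z_M : ℝ)
    (hlam : 0 < lam) (hμ : 0 < μ) (hτ : 0 < τ)
    (hA : τ * ‖A‖^2 ≤ 1) (hA' : τ * ‖A'‖^2 ≤ 1)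
    (hv : ‖v‖ ≤ v_M) (hv' : ‖v'‖ ≤ v_M)
    (z z' : EuclideanSpace ℝ (Fin n))
    (hz : ∀ x, enet A (A v) lam μ z ≤ enet A (A v) lam μ x)
    (hz' : ∀ x, enet A' (A' v') lam μ z' ≤ enet A' (A' v') lam μ x)
    (hzM : ‖z‖ ≤ z_M) (hzM' : ‖z'‖ ≤ z_M) :
    ‖z - z'‖ ≤
      (z_M + v_M) *
        ‖(ContinuousLinearMap.adjoint A).comp A - (ContinuousLinearMap.adjoint A').comp A'‖ / μ +
      ‖v - v'‖ / (μ * τ) :=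
  minimizer_drift_bound_general A A' v v' lam μ τ v_M z_M hlam hμ hτ hA hA' hv z z' hz hz' hzM'
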